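/- arXiv:cs/0401023 — 5 statements merged into one kernel-verified Lean document; each statement's English description precedes it below -/
import Mathlib

section
/- Let X and Y be compact metric spaces. If for every ε > 0 there exists a bijection f : X → Y such that e^{-ε}·d_X(x,x') ≤ d_Y(f x, f x') ≤ e^{ε}·d_X(x,x') for all x, x' ∈ X, then X and Y are isometric (there exists a bijective isometry from X onto Y). -/
/-!
A bijection `f` with `exp (-ε) * d ≤ d ∘ f ≤ exp ε * d` distorts distances additively by at most
`(exp ε - 1) * diam X`, so it bounds the Gromov–Hausdorff distance between `X` and `Y` by half of
that. Letting `ε → 0`, the Gromov–Hausdorff distance vanishes, and nonempty compact metric spaces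
at Gromov–Hausdorff distance zero are isometric.
-/

open Real Filter Topology GromovHausdorff

lemma abs_sub_le_exp_sub_one_mul {ε a b D : ℝ} (hε : 0 ≤ ε) (ha : 0 ≤ a) (haD : a ≤ D)
    (hlow : exp (-ε) * a ≤ b) (hup : b ≤ exp ε * a) : |a - b| ≤ (exp ε - 1) * D := by
  have hlow' : 1 - ε ≤ exp (-ε) := by linarith [add_one_le_exp (-ε)]
  have hup' : ε ≤ exp ε - 1 := by linarith [add_one_le_exp ε]
  have hεa : (1 - ε) * a ≤ exp (-ε) * a := mul_le_mul_of_nonneg_right hlow' ha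
  have hεD : (exp ε - 1) * a ≤ (exp ε - 1) * D := mul_le_mul_of_nonneg_left haD (by linarith)
  rw [abs_sub_le_iff]
  constructor <;> nlinarith

section

variable {X Y : Type*} [MetricSpace X] [CompactSpace X] [Nonempty X]
  [MetricSpace Y] [CompactSpace Y] [Nonempty Y]

lemma ghDist_le_of_surjective_of_abs_dist_sub_le {f : X → Y} (hf : Function.Surjective f)
    {η : ℝ} (H : ∀ x x' : X, |dist x x' - dist (f x) (f x')| ≤ η) : ghDist X Y ≤ η / 2 := by
  have := ghDist_le_of_approx_subsets (s := Set.univ) (fun x => f x) (ε₁ := 0) (ε₃ := 0)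
    (fun x => ⟨x, Set.mem_univ x, (dist_self x).le⟩)
    (fun y => ⟨⟨(hf y).choose, Set.mem_univ _⟩, by rw [(hf y).choose_spec, dist_self]⟩)
    (fun x x' => H x x')
  simpa using this

lemma ghDist_le_of_surjective_of_bilipschitz {ε : ℝ} (hε : 0 ≤ ε) {f : X → Y}
    (hf : Function.Surjective f)
    (hdist : ∀ x x' : X, exp (-ε) * dist x x' ≤ dist (f x) (f x') ∧
      dist (f x) (f x') ≤ exp ε * dist x x') :
    ghDist X Y ≤ (exp ε - 1) * Metric.diam (Set.univ : Set X) / 2 := by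
  refine ghDist_le_of_surjective_of_abs_dist_sub_le hf fun x x' => ?_
  exact abs_sub_le_exp_sub_one_mul hε dist_nonneg
    (Metric.dist_le_diam_of_mem isCompact_univ.isBounded (Set.mem_univ x) (Set.mem_univ x'))
    (hdist x x').1 (hdist x x').2

end

/-- If compact metric spaces `X` and `Y` admit, for every `ε > 0`, a bijection
`f : X → Y` with `exp (-ε) * d x x' ≤ d (f x) (f x') ≤ exp ε * d x x'`, then
`X` and `Y` are isometric (there is a bijective isometry from `X` onto `Y`). -/
theorem lipschitz_dist_zero_implies_isometric
    {X Y : Type*} [MetricSpace X] [CompactSpace X] [MetricSpace Y] [CompactSpace Y]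
    (h : ∀ ε : ℝ, 0 < ε → ∃ f : X → Y, Function.Bijective f ∧
      ∀ x x' : X, Real.exp (-ε) * dist x x' ≤ dist (f x) (f x') ∧
        dist (f x) (f x') ≤ Real.exp ε * dist x x') :
    ∃ f : X → Y, Function.Bijective f ∧ Isometry f := by
  obtain ⟨f₁, hf₁, -⟩ := h 1 one_pos
  rcases isEmpty_or_nonempty X with hX | hX
  · exact ⟨f₁, hf₁, fun x => isEmptyElim x⟩
  have : Nonempty Y := hX.map f₁
  set D := Metric.diam (Set.univ : Set X)
  have hlim : Tendsto (fun ε => (exp ε - 1) * D / 2) (𝓝[>] 0) (𝓝 0) := by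
    have : Continuous fun ε => (exp ε - 1) * D / 2 := by fun_prop
    simpa using (this.tendsto 0).mono_left nhdsWithin_le_nhds
  have hgh : ghDist X Y ≤ 0 := by
    refine ge_of_tendsto hlim (eventually_nhdsWithin_of_forall fun ε (hε : 0 < ε) => ?_)
    obtain ⟨f, hf, hdist⟩ := h ε hε
    exact ghDist_le_of_surjective_of_bilipschitz hε.le hf.2 hdist
  obtain ⟨e⟩ := toGHSpace_eq_toGHSpace_iff_isometryEquiv.1 (dist_le_zero.1 hgh)
  exact ⟨e, e.bijective, e.isometry⟩
end

section
/- Let X be a nonempty compact metric space in which every pair of points x, y is joined by a geodesic (an isometric embedding γ : [0, d(x,y)] → X with γ(0) = x, γ(d(x,y)) = y). Let ε > 0 and let δ > 0 satisfy δ < ε/4 and δ ≤ ε²/(4·diam X), and let S ⊆ X be a finite δ-net. For x, y ∈ S define the graph distance d_G(x,y) as the infimum of Σ_{i=1}^{n} d(z_{i−1}, z_i) over all finite chains x = z_0, z_1, …, z_n = y of points of S with d(z_{i−1}, z_i) < ε for each i. Then for all x, y ∈ S: d(x,y) ≤ d_G(x,y) ≤ d(x,y) + ε. -/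
/-- Triangle inequality along a chain. -/
theorem chain_lower' {X : Type*} [MetricSpace X] {n : ℕ} (z : Fin (n+1) → X) :
    dist (z 0) (z (Fin.last n)) ≤ ∑ i : Fin n, dist (z i.castSucc) (z i.succ) := by
  induction n with
  | zero => simp
  | succ m ih =>
    rw [Fin.sum_univ_castSucc]
    have h1 := ih (z ∘ Fin.castSucc)
    simp only [Function.comp, Fin.succ_castSucc, Fin.castSucc_zero] at h1
    calc dist (z 0) (z (Fin.last (m+1)))
        ≤ dist (z 0) (z (Fin.last m).castSucc) + dist (z (Fin.last m).castSucc) (z (Fin.last (m+1))) := dist_triangle _ _ _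
      _ ≤ (∑ i : Fin m, dist (z i.castSucc.castSucc) (z i.succ.castSucc)) + dist (z (Fin.last m).castSucc) (z (Fin.last (m+1))) := by
          gcongr
      _ = _ := by
          congr 1

/-- Quantitative graph approximation of a compact geodesic space.  Let `X` be a
nonempty compact metric space in which any two points are joined by a geodesic,
let `ε > 0`, let `δ > 0` satisfy `δ < ε/4` and `δ ≤ ε²/(4·diam X)`, and let `S`
be a finite `δ`-net in `X`.  Define the graph distance `dG x y` for `x, y ∈ S`
as the infimum of `∑ d(z_{i-1}, z_i)` over all chains `x = z_0, z_1, …, z_n = y`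
of points of `S` with `d(z_{i-1}, z_i) < ε` for each `i`.  Then
`d(x,y) ≤ dG x y ≤ d(x,y) + ε` for all `x, y ∈ S`. -/
theorem graph_distance_approximates_geodesic_distance
    {X : Type*} [MetricSpace X] [CompactSpace X] [Nonempty X]
    (hgeo : ∀ x y : X, ∃ γ : ℝ → X, γ 0 = x ∧ γ (dist x y) = y ∧
      ∀ s ∈ Set.Icc (0 : ℝ) (dist x y), ∀ t ∈ Set.Icc (0 : ℝ) (dist x y),
        dist (γ s) (γ t) = |s - t|)
    {ε δ : ℝ} (hε : 0 < ε) (hδ : 0 < δ) (hδε : δ < ε / 4)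
    (hδdiam : δ ≤ ε ^ 2 / (4 * Metric.diam (Set.univ : Set X)))
    (S : Set X) (hSfin : S.Finite) (hSnet : ∀ p : X, ∃ s ∈ S, dist p s ≤ δ)
    (dG : X → X → ℝ)
    (hdG : ∀ x y : X, dG x y = sInf {L : ℝ | ∃ n : ℕ, ∃ z : Fin (n + 1) → X,
      z 0 = x ∧ z (Fin.last n) = y ∧ (∀ i, z i ∈ S) ∧
      (∀ i : Fin n, dist (z i.castSucc) (z i.succ) < ε) ∧
      L = ∑ i : Fin n, dist (z i.castSucc) (z i.succ)}) :
    ∀ x ∈ S, ∀ y ∈ S, dist x y ≤ dG x y ∧ dG x y ≤ dist x y + ε := by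
  -- the diameter is positive
  have hdiam0 : 0 ≤ Metric.diam (Set.univ : Set X) := Metric.diam_nonneg
  have hdiam : 0 < Metric.diam (Set.univ : Set X) := by
    rcases lt_or_eq_of_le hdiam0 with h | h
    · exact h
    · rw [← h] at hδdiam; simp at hδdiam; linarith
  have hd4 : 4 * Metric.diam (Set.univ : Set X) * δ ≤ ε ^ 2 := by
    have := (le_div_iff₀ (by positivity)).mp hδdiam
    linarith
  intro x hx y hy
  rw [hdG]
  set T : Set ℝ := {L : ℝ | ∃ n : ℕ, ∃ z : Fin (n + 1) → X,
      z 0 = x ∧ z (Fin.last n) = y ∧ (∀ i, z i ∈ S) ∧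
      (∀ i : Fin n, dist (z i.castSucc) (z i.succ) < ε) ∧
      L = ∑ i : Fin n, dist (z i.castSucc) (z i.succ)} with hT
  have hTlb : ∀ L ∈ T, dist x y ≤ L := by
    rintro L ⟨n, z, hz0, hzl, -, -, rfl⟩
    have := chain_lower' z
    rwa [hz0, hzl] at this
  have hbdd : BddBelow T := ⟨dist x y, hTlb⟩
  -- construct a good chain
  have hmem : ∃ L ∈ T, L ≤ dist x y + ε := by
    by_cases hxy : dist x y = 0
    · refine ⟨0, ⟨0, fun _ => x, rfl, ?_, fun _ => hx, fun i => i.elim0, by simp⟩, by linarith⟩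
      have : x = y := by rwa [dist_eq_zero] at hxy
      simpa using this
    · have hd : 0 < dist x y := lt_of_le_of_ne dist_nonneg (Ne.symm hxy)
      set d : ℝ := dist x y with hdd
      obtain ⟨γ, hγ0, hγd, hγiso⟩ := hgeo x y
      choose sf hsfS hsfd using hSnet
      set n : ℕ := ⌈2 * d / ε⌉₊ with hn
      have hnpos : 0 < n := Nat.ceil_pos.mpr (by positivity)
      have hnR : (0 : ℝ) < n := by exact_mod_cast hnpos
      obtain ⟨m, hm⟩ : ∃ m, n = m + 1 := ⟨n - 1, (Nat.succ_pred_eq_of_pos hnpos).symm⟩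
      have hceil_le : 2 * d / ε ≤ (n : ℝ) := Nat.le_ceil _
      have hceil_lt : (n : ℝ) < 2 * d / ε + 1 := Nat.ceil_lt_add_one (by positivity)
      clear_value n
      have hstep_le : d / n ≤ ε / 2 := by
        rw [div_le_div_iff₀ hnR (by norm_num : (0:ℝ) < 2)]
        have : 2 * d ≤ (n : ℝ) * ε := by
          rw [div_le_iff₀ hε] at hceil_le; linarith
        linarith
      set t : ℕ → ℝ := fun i => i * (d / n) with ht
      have htmem : ∀ i : ℕ, i ≤ n → t i ∈ Set.Icc (0 : ℝ) d := by
        intro i hi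
        constructor
        · positivity
        · have : (i : ℝ) ≤ n := by exact_mod_cast hi
          calc (i : ℝ) * (d / n) ≤ (n : ℝ) * (d / n) := by
                apply mul_le_mul_of_nonneg_right this (by positivity)
            _ = d := by field_simp
      have htn : t n = d := by
        simp only [ht]; field_simp
      set z : Fin (n + 1) → X := fun i =>
        if (i : ℕ) = 0 then x else if (i : ℕ) = n then y else sf (γ (t i)) with hz
      have hz0 : z 0 = x := by simp [hz]
      have hzl : z (Fin.last n) = y := by
        simp only [hz, Fin.val_last]
        rw [if_neg (Nat.pos_iff_ne_zero.mp hnpos)]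
        simp
      have hzmem : ∀ i, z i ∈ S := by
        intro i
        simp only [hz]
        split_ifs
        · exact hx
        · exact hy
        · exact hsfS _
      -- distance from chain point to geodesic point
      have hw : ∀ i : Fin (n + 1), dist (z i) (γ (t i)) ≤ δ := by
        intro i
        simp only [hz]
        split_ifs with h0 hn'
        · have : t (i : ℕ) = 0 := by simp [ht, h0]
          rw [this, hγ0]; simp [hδ.le]
        · rw [hn', htn, hγd]; simp [hδ.le]
        · rw [dist_comm]; exact hsfd _
      have hw0 : dist (z 0) (γ (t 0)) = 0 := by
        have : t 0 = 0 := by simp [ht]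
        rw [hz0, this, hγ0, dist_self]
      have hwl : dist (z (Fin.last n)) (γ (t n)) = 0 := by
        rw [hzl, htn, hγd, dist_self]
      -- geodesic step distances
      have hgstep : ∀ i : Fin n, dist (γ (t i)) (γ (t (i + 1))) = d / n := by
        intro i
        have h1 : t (i : ℕ) ∈ Set.Icc (0 : ℝ) d := htmem _ (le_of_lt i.isLt)
        have h2 : t ((i : ℕ) + 1) ∈ Set.Icc (0 : ℝ) d := htmem _ i.isLt
        rw [hγiso _ h1 _ h2]
        simp only [ht]
        push_cast
        rw [abs_of_nonpos (by nlinarith [div_nonneg hd.le hnR.le])]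
        ring
      -- each chain edge
      have hedge_le : ∀ i : Fin n,
          dist (z i.castSucc) (z i.succ) ≤
            dist (z i.castSucc) (γ (t i)) + d / n + dist (z i.succ) (γ (t ((i : ℕ) + 1))) := by
        intro i
        have h1 : dist (z i.castSucc) (z i.succ) ≤
            dist (z i.castSucc) (γ (t i)) + dist (γ (t i)) (γ (t ((i:ℕ) + 1)))
              + dist (γ (t ((i:ℕ) + 1))) (z i.succ) := dist_triangle4 _ _ _ _
        rw [hgstep i] at h1
        rw [dist_comm (z i.succ)]
        have hcs : ((i.castSucc : Fin (n+1)) : ℕ) = (i : ℕ) := rfl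
        have hsc : ((i.succ : Fin (n+1)) : ℕ) = (i : ℕ) + 1 := rfl
        rw [hcs, hsc] at *
        linarith [h1]
      have hedge : ∀ i : Fin n, dist (z i.castSucc) (z i.succ) < ε := by
        intro i
        have h1 := hedge_le i
        have h2 : dist (z i.castSucc) (γ (t (i.castSucc : ℕ))) ≤ δ := hw i.castSucc
        have h3 : dist (z i.succ) (γ (t (i.succ : ℕ))) ≤ δ := hw i.succ
        have hcs : ((i.castSucc : Fin (n+1)) : ℕ) = (i : ℕ) := rfl
        have hsc : ((i.succ : Fin (n+1)) : ℕ) = (i : ℕ) + 1 := rfl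
        rw [hcs] at h2; rw [hsc] at h3
        have : dist (z i.castSucc) (z i.succ) ≤ δ + d / n + δ := by linarith
        linarith
      -- sum bound
      set w : Fin (n + 1) → ℝ := fun i => dist (z i) (γ (t i)) with hwdef
      have hsum1 : ∑ i : Fin n, dist (z i.castSucc) (z i.succ)
          ≤ ∑ i : Fin n, (w i.castSucc + d / n + w i.succ) := by
        apply Finset.sum_le_sum
        intro i _
        have h1 := hedge_le i
        have hcs : ((i.castSucc : Fin (n+1)) : ℕ) = (i : ℕ) := rfl
        have hsc : ((i.succ : Fin (n+1)) : ℕ) = (i : ℕ) + 1 := rfl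
        simp only [hwdef, hcs, hsc]
        exact h1
      have hsum2 : ∑ i : Fin n, (w i.castSucc + d / n + w i.succ)
          = (∑ i : Fin n, w i.castSucc) + d + (∑ i : Fin n, w i.succ) := by
        rw [Finset.sum_add_distrib, Finset.sum_add_distrib, Finset.sum_const]
        simp only [Finset.card_univ, Fintype.card_fin, nsmul_eq_mul]
        have : (n : ℝ) * (d / n) = d := by field_simp
        rw [this]
      have hWsum : ∑ i : Fin (n + 1), w i ≤ m * δ := by
        subst hm
        rw [Fin.sum_univ_succ]
        have hW0 : w 0 = 0 := hw0
        rw [hW0, zero_add]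
        rw [Fin.sum_univ_castSucc]
        have hWl : w ((Fin.last m).succ) = 0 := by
          have : (Fin.last m).succ = Fin.last (m + 1) := rfl
          rw [this]; exact hwl
        rw [hWl, add_zero]
        calc ∑ i : Fin m, w (i.castSucc.succ) ≤ ∑ _i : Fin m, δ :=
              Finset.sum_le_sum fun i _ => hw _
          _ = m * δ := by simp [mul_comm]
      have hsumcs : ∑ i : Fin n, w i.castSucc = (∑ i : Fin (n+1), w i) - w (Fin.last n) := by
        rw [Fin.sum_univ_castSucc]; ring
      have hsumsc : ∑ i : Fin n, w i.succ = (∑ i : Fin (n+1), w i) - w 0 := by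
        rw [Fin.sum_univ_succ]; ring
      have hmδ : 2 * (m : ℝ) * δ ≤ ε := by
        have hmlt : (m : ℝ) < 2 * d / ε := by
          have : ((m : ℝ) + 1) < 2 * d / ε + 1 := by
            rw [hm] at hceil_lt; push_cast at hceil_lt; linarith
          linarith
        have hmε : (m : ℝ) * ε < 2 * d := by
          rw [lt_div_iff₀ hε] at hmlt; linarith
        have hdle : d ≤ Metric.diam (Set.univ : Set X) :=
          Metric.dist_le_diam_of_mem isCompact_univ.isBounded (Set.mem_univ x) (Set.mem_univ y)
        nlinarith [mul_pos hε hε, hδ, hε]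
      have hfinal : ∑ i : Fin n, dist (z i.castSucc) (z i.succ) ≤ d + ε := by
        have hWlv : w (Fin.last n) = 0 := hwl
        have hW0v : w 0 = 0 := hw0
        have h := hsum1.trans_eq hsum2
        rw [hsumcs, hsumsc, hWlv, hW0v] at h
        have := hWsum
        linarith
      exact ⟨_, ⟨n, z, hz0, hzl, hzmem, hedge, rfl⟩, hfinal⟩
  obtain ⟨L, hL, hLle⟩ := hmem
  exact ⟨le_csInf ⟨L, hL⟩ hTlb, le_trans (csInf_le hbdd hL) hLle⟩
end

section
/- Let p₁, p₂, p₃, p₄ be points of Euclidean three-space ℝ³. Then D(p₁,p₂,p₃,p₄) = 8·(det M)², where M is the 3×3 matrix whose rows are p₂ − p₁, p₃ − p₁, p₄ − p₁. Consequently, p₁, p₂, p₃, p₄ are the vertices of a (non-degenerate) simplex in ℝ³ — i.e. they are affinely independent — if and only if D(p₁,p₂,p₃,p₄) ≠ 0. -/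
/-!
Writing `uᵢ = pᵢ₊₁ - p₁`, every squared distance is a linear expression in the entries of the
Gram matrix `G = (⟪uᵢ, uⱼ⟫)`: `dist p₁ pᵢ₊₁ ² = ⟪uᵢ, uᵢ⟫` and
`dist pᵢ₊₁ pⱼ₊₁ ² = ⟪uᵢ, uᵢ⟫ + ⟪uⱼ, uⱼ⟫ - 2 ⟪uᵢ, uⱼ⟫`. Substituting these into the bordered
determinant gives the polynomial identity `D = 8 det G`. In `ℝ³` we have `G = M Mᵀ`, so
`det G = (det M)²`; and `det G ≠ 0` exactly when the `uᵢ` are linearly independent, i.e. when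
the points are affinely independent.
-/

/-- The Cayley–Menger determinant of four points: the determinant of the `5×5`
matrix with first row `(0,1,1,1,1)`, first column `(0,1,1,1,1)ᵀ`, and remaining
`(i,j)` entry `d_{ij}²` (with `d_{ii} = 0`). -/
noncomputable def cayleyMenger (p₁ p₂ p₃ p₄ : EuclideanSpace ℝ (Fin 3)) : ℝ :=
  Matrix.det (Matrix.of
    ![![0, 1, 1, 1, 1],
      ![1, 0, dist p₁ p₂ ^ 2, dist p₁ p₃ ^ 2, dist p₁ p₄ ^ 2],
      ![1, dist p₁ p₂ ^ 2, 0, dist p₂ p₃ ^ 2, dist p₂ p₄ ^ 2],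
      ![1, dist p₁ p₃ ^ 2, dist p₂ p₃ ^ 2, 0, dist p₃ p₄ ^ 2],
      ![1, dist p₁ p₄ ^ 2, dist p₂ p₄ ^ 2, dist p₃ p₄ ^ 2, 0]])

open Matrix

theorem Matrix.det_cayleyMenger_of_gram {R : Type*} [CommRing R] (a b c x y z : R) :
    det !![0, 1, 1, 1, 1;
           1, 0, a, b, c;
           1, a, 0, a + b - 2 * x, a + c - 2 * y;
           1, b, a + b - 2 * x, 0, b + c - 2 * z;
           1, c, a + c - 2 * y, b + c - 2 * z, 0] =
      8 * det !![a, x, y; x, b, z; y, z, c] := by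
  simp [det_succ_row_zero, Fin.sum_univ_succ, Fin.succAbove]
  ring

theorem Matrix.det_gram_euclideanSpace {ι : Type*} [Fintype ι] [DecidableEq ι]
    (v : ι → EuclideanSpace ℝ ι) : (gram ℝ v).det = (of fun i j => v i j).det ^ 2 := by
  have hgram : gram ℝ v = (of fun i j => v i j) * (of fun i j => v i j)ᵀ := by
    ext i j
    simp [gram, mul_apply, PiLp.inner_apply, mul_comm]
  rw [hgram, det_mul, det_transpose, sq]

theorem affineIndependent_iff_linearIndependent_vsub_zero {k V P : Type*} [Ring k]
    [AddCommGroup V] [Module k V] [AddTorsor V P] {n : ℕ} (p : Fin (n + 1) → P) :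
    AffineIndependent k p ↔ LinearIndependent k fun i : Fin n => p i.succ -ᵥ p 0 := by
  rw [affineIndependent_iff_linearIndependent_vsub k p 0,
    ← linearIndependent_equiv (finSuccAboveEquiv 0)]
  rfl

theorem dist_sq_eq_inner_sub_sub {E : Type*} [NormedAddCommGroup E] [InnerProductSpace ℝ E]
    (p q r : E) :
    dist q r ^ 2 =
      inner ℝ (q - p) (q - p) + inner ℝ (r - p) (r - p) - 2 * inner ℝ (q - p) (r - p) := by
  rw [dist_eq_norm, ← sub_sub_sub_cancel_right q r p, norm_sub_sq_real,
    real_inner_self_eq_norm_sq, real_inner_self_eq_norm_sq]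
  ring

theorem cayleyMenger_eq_eight_det_gram (p₁ p₂ p₃ p₄ : EuclideanSpace ℝ (Fin 3)) :
    cayleyMenger p₁ p₂ p₃ p₄ = 8 * (gram ℝ ![p₂ - p₁, p₃ - p₁, p₄ - p₁]).det := by
  simp only [cayleyMenger, dist_sq_eq_inner_sub_sub p₁, sub_self, inner_zero_left, zero_add,
    mul_zero, sub_zero]
  rw [det_cayleyMenger_of_gram]
  congr 2
  ext i j
  fin_cases i <;> fin_cases j <;> simp [gram, real_inner_comm]

/-- `D(p₁,p₂,p₃,p₄) = 8 (det M)²`, where `M` is the matrix with rows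
`p₂ - p₁, p₃ - p₁, p₄ - p₁`; consequently the four points are affinely
independent (vertices of a nondegenerate simplex) iff `D ≠ 0`. -/
theorem cayleyMenger_eq_eight_det_sq_and_affineIndependent_iff
    (p₁ p₂ p₃ p₄ : EuclideanSpace ℝ (Fin 3)) :
    cayleyMenger p₁ p₂ p₃ p₄ =
      8 * Matrix.det (Matrix.of fun i j : Fin 3 =>
        (![p₂ - p₁, p₃ - p₁, p₄ - p₁] i) j) ^ 2 ∧
    (AffineIndependent ℝ ![p₁, p₂, p₃, p₄] ↔ cayleyMenger p₁ p₂ p₃ p₄ ≠ 0) := by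
  have hedges : (fun i : Fin 3 => ![p₁, p₂, p₃, p₄] i.succ -ᵥ ![p₁, p₂, p₃, p₄] 0) =
      ![p₂ - p₁, p₃ - p₁, p₄ - p₁] := by
    ext1 i
    fin_cases i <;> rfl
  rw [cayleyMenger_eq_eight_det_gram, affineIndependent_iff_linearIndependent_vsub_zero, hedges,
    ← det_gram_ne_zero_iff_linearIndependent, det_gram_euclideanSpace]
  exact ⟨rfl, by simp⟩
end

section
/- Let p₁, p₂, p₃, p₄ be affinely independent points of Euclidean three-space ℝ³ (the vertices of a tetrahedron), and let R be the radius of the sphere circumscribed about them (the circumradius of the simplex with these vertices). Then R² = −(1/2)·Δ(p₁,p₂,p₃,p₄)/D(p₁,p₂,p₃,p₄). -/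
/-- `Δ(p₁,p₂,p₃,p₄)`: the determinant of the `4×4` matrix of squared mutual
distances (with zeros on the diagonal). -/
noncomputable def deltaDet (p₁ p₂ p₃ p₄ : EuclideanSpace ℝ (Fin 3)) : ℝ :=
  Matrix.det (Matrix.of
    ![![0, dist p₁ p₂ ^ 2, dist p₁ p₃ ^ 2, dist p₁ p₄ ^ 2],
      ![dist p₁ p₂ ^ 2, 0, dist p₂ p₃ ^ 2, dist p₂ p₄ ^ 2],
      ![dist p₁ p₃ ^ 2, dist p₂ p₃ ^ 2, 0, dist p₃ p₄ ^ 2],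
      ![dist p₁ p₄ ^ 2, dist p₂ p₄ ^ 2, dist p₃ p₄ ^ 2, 0]])

namespace Matrix

variable {R : Type*} [CommRing R] {n : ℕ}

def bordered (A : Matrix (Fin n) (Fin n) R) : Matrix (Fin (n + 1)) (Fin (n + 1)) R :=
  of (vecCons (vecCons 0 1) fun i => vecCons 1 (A i))

@[simp] lemma bordered_zero_zero (A : Matrix (Fin n) (Fin n) R) : bordered A 0 0 = 0 := rfl
@[simp] lemma bordered_zero_succ (A : Matrix (Fin n) (Fin n) R) (j : Fin n) :
    bordered A 0 j.succ = 1 := rfl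
@[simp] lemma bordered_succ_zero (A : Matrix (Fin n) (Fin n) R) (i : Fin n) :
    bordered A i.succ 0 = 1 := rfl
@[simp] lemma bordered_succ_succ (A : Matrix (Fin n) (Fin n) R) (i j : Fin n) :
    bordered A i.succ j.succ = A i j := rfl

lemma bordered_transpose (A : Matrix (Fin n) (Fin n) R) : (bordered A)ᵀ = bordered Aᵀ := by
  ext i j
  cases i using Fin.cases <;> cases j using Fin.cases <;> rfl

lemma det_bordered_add_col (A : Matrix (Fin n) (Fin n) R) (a : Fin n → R) :
    det (bordered (of fun i j => A i j + a i)) = det (bordered A) := by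
  refine det_eq_of_forall_row_eq_smul_add_const (vecCons 0 a) 0 rfl fun i j => ?_
  cases i using Fin.cases <;> cases j using Fin.cases <;> simp

lemma det_bordered_add_row (A : Matrix (Fin n) (Fin n) R) (b : Fin n → R) :
    det (bordered (of fun i j => A i j + b j)) = det (bordered A) := by
  rw [← det_transpose, bordered_transpose, ← det_transpose (bordered A), bordered_transpose]
  exact det_bordered_add_col Aᵀ b

lemma det_bordered_add_add (A : Matrix (Fin n) (Fin n) R) (a b : Fin n → R) :
    det (bordered (of fun i j => A i j + a i + b j)) = det (bordered A) :=
  (det_bordered_add_row (of fun i j => A i j + a i) b).trans (det_bordered_add_col A a)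

lemma det_eq_mul_det_submatrix_succ_of_col_zero (M : Matrix (Fin (n + 1)) (Fin (n + 1)) R)
    (hM : ∀ i : Fin n, M i.succ 0 = 0) : det M = M 0 0 * det (M.submatrix Fin.succ Fin.succ) := by
  simp [det_succ_column_zero M, Fin.sum_univ_succ, hM]

lemma det_add_const (A : Matrix (Fin n) (Fin n) R) (t : R) :
    det (of fun i j => A i j + t) = det A - t * det (bordered A) := by
  -- `M` is `bordered A'` with first column `(1, t, …, t)`; expand it linearly in that column
  -- (`hlin`), or subtract `t` times the first row from the others (`hrow`).
  set A' : Matrix (Fin n) (Fin n) R := of fun i j => A i j + t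
  have hbord : det (bordered A') = det (bordered A) := det_bordered_add_col A fun _ => t
  set M := updateCol (bordered A') 0 (Pi.single 0 1 + t • fun i => bordered A' i 0)
  have hlin : det M = det A' + t * det (bordered A') := by
    rw [det_updateCol_add, det_updateCol_smul, updateCol_eq_self,
      det_eq_mul_det_submatrix_succ_of_col_zero _ fun i => by simp]
    simp only [updateCol_self, Pi.single_eq_same, one_mul]
    congr 2
  have hrow : det M = det A := by
    have hB := det_eq_mul_det_submatrix_succ_of_col_zero
      (of (vecCons (vecCons 1 1) fun i => vecCons 0 (A i))) fun i => rfl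
    refine (det_eq_of_forall_row_eq_smul_add_const (vecCons 0 fun _ => t) 0 rfl fun i j => ?_).trans
      (hB.trans (one_mul _))
    cases i using Fin.cases <;> cases j using Fin.cases <;> simp [M, A']
  linear_combination hrow - hlin - t * hbord

lemma det_bordered_of_row_col_zero (A : Matrix (Fin (n + 1)) (Fin (n + 1)) R)
    (hrow : ∀ j, A 0 j = 0) (hcol : ∀ i, A i 0 = 0) :
    det (bordered A) = -det (A.submatrix Fin.succ Fin.succ) := by
  have hA : det A = 0 := det_eq_zero_of_row_eq_zero 0 hrow
  have hB := det_eq_mul_det_submatrix_succ_of_col_zero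
    (of (vecCons (fun _ => 1) fun i => vecCons 0 fun j => A i.succ j.succ)) fun i => rfl
  have hshift : det (of fun i j => A i j + 1) = det (A.submatrix Fin.succ Fin.succ) := by
    refine (det_eq_of_forall_row_eq_smul_add_const (vecCons 0 fun _ => 1) 0 rfl fun i j => ?_).trans
      (hB.trans (one_mul _))
    cases i using Fin.cases <;> cases j using Fin.cases <;> simp [hrow, hcol]
  linear_combination det_add_const A 1 - hshift + hA

end Matrix

open Matrix Module
open scoped InnerProductSpace

section Geometry

variable {V P : Type*} [NormedAddCommGroup V] [InnerProductSpace ℝ V] [MetricSpace P]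
  [NormedAddTorsor V P]

def sqDistMatrix {ι : Type*} (p : ι → P) : Matrix ι ι ℝ := of fun i j => dist (p i) (p j) ^ 2

lemma dist_sq_eq_neg_two_mul_inner_add (p q c : P) :
    dist p q ^ 2 = -2 * ⟪p -ᵥ c, q -ᵥ c⟫_ℝ + ‖p -ᵥ c‖ ^ 2 + ‖q -ᵥ c‖ ^ 2 := by
  rw [dist_eq_norm_vsub V, ← vsub_sub_vsub_cancel_right p q c, norm_sub_sq_real]
  ring

lemma sqDistMatrix_eq_gram {ι : Type*} (p : ι → P) (c : P) :
    sqDistMatrix p = of fun i j =>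
      ((-2 : ℝ) • gram ℝ fun k => p k -ᵥ c) i j + ‖p i -ᵥ c‖ ^ 2 + ‖p j -ᵥ c‖ ^ 2 := by
  ext i j
  simp [sqDistMatrix, gram_apply, dist_sq_eq_neg_two_mul_inner_add (p i) (p j) c]

variable {n : ℕ}

lemma det_bordered_sqDistMatrix (p : Fin n → P) (c : P) :
    det (bordered (sqDistMatrix p)) = det (bordered ((-2 : ℝ) • gram ℝ fun i => p i -ᵥ c)) := by
  rw [sqDistMatrix_eq_gram p c]
  exact det_bordered_add_add _ _ _

lemma det_sqDistMatrix_of_dist_eq (p : Fin n → P) {c : P} {r : ℝ} (h : ∀ i, dist (p i) c = r) :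
    det (sqDistMatrix p) =
      (-2) ^ n * det (gram ℝ fun i => p i -ᵥ c) - 2 * r ^ 2 * det (bordered (sqDistMatrix p)) := by
  have hnorm : ∀ i, ‖p i -ᵥ c‖ = r := fun i => by rw [← dist_eq_norm_vsub V, h]
  have hsq : sqDistMatrix p =
      of fun i j => ((-2 : ℝ) • gram ℝ fun k => p k -ᵥ c) i j + 2 * r ^ 2 := by
    rw [sqDistMatrix_eq_gram p c]
    ext i j
    simp only [of_apply, hnorm]
    ring
  rw [det_bordered_sqDistMatrix p c, hsq, det_add_const, det_smul, Fintype.card_fin]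

lemma det_bordered_sqDistMatrix_eq_det_gram (p : Fin (n + 1) → P) :
    det (bordered (sqDistMatrix p)) =
      -(-2) ^ n * det (gram ℝ fun i : Fin n => p i.succ -ᵥ p 0) := by
  rw [det_bordered_sqDistMatrix p (p 0),
    det_bordered_of_row_col_zero _ (fun j => by simp [gram_apply]) (fun i => by simp [gram_apply])]
  change -det ((-2 : ℝ) • gram ℝ fun i : Fin n => p i.succ -ᵥ p 0) = _
  rw [det_smul, Fintype.card_fin, neg_mul]

lemma det_gram_eq_zero_of_finrank_lt [FiniteDimensional ℝ V] {ι : Type*} [Fintype ι]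
    [DecidableEq ι] (v : ι → V) (h : finrank ℝ V < Fintype.card ι) : det (gram ℝ v) = 0 :=
  not_not.mp fun hv =>
    h.not_ge (det_gram_ne_zero_iff_linearIndependent.mp hv).fintype_card_le_finrank

lemma det_gram_vsub_ne_zero {p : Fin (n + 1) → P} (hp : AffineIndependent ℝ p) :
    det (gram ℝ fun i : Fin n => p i.succ -ᵥ p 0) ≠ 0 := by
  refine det_gram_ne_zero_iff_linearIndependent.mpr ?_
  exact ((affineIndependent_iff_linearIndependent_vsub ℝ p 0).mp hp).comp
    (fun i => ⟨i.succ, i.succ_ne_zero⟩)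
    fun _ _ hij => Fin.succ_injective _ (congrArg Subtype.val hij)

theorem sq_eq_neg_half_mul_det_sqDistMatrix_div [FiniteDimensional ℝ V] (hV : finrank ℝ V ≤ n)
    {p : Fin (n + 1) → P} (hp : AffineIndependent ℝ p) {c : P} {r : ℝ}
    (h : ∀ i, dist (p i) c = r) :
    r ^ 2 = -(1 / 2) * (det (sqDistMatrix p) / det (bordered (sqDistMatrix p))) := by
  have hCM : det (bordered (sqDistMatrix p)) ≠ 0 := by
    rw [det_bordered_sqDistMatrix_eq_det_gram]
    exact mul_ne_zero (by simp) (det_gram_vsub_ne_zero hp)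
  have hgram : det (gram ℝ fun i => p i -ᵥ c) = 0 :=
    det_gram_eq_zero_of_finrank_lt _ (by simpa [Nat.lt_succ_iff] using hV)
  rw [det_sqDistMatrix_of_dist_eq p h, hgram]
  field_simp
  ring

end Geometry

lemma deltaDet_eq_det_sqDistMatrix (p₁ p₂ p₃ p₄ : EuclideanSpace ℝ (Fin 3)) :
    deltaDet p₁ p₂ p₃ p₄ = det (sqDistMatrix ![p₁, p₂, p₃, p₄]) := by
  unfold deltaDet
  congr 1
  ext i j
  fin_cases i <;> fin_cases j <;> simp [sqDistMatrix, dist_comm]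

lemma cayleyMenger_eq_det_bordered_sqDistMatrix (p₁ p₂ p₃ p₄ : EuclideanSpace ℝ (Fin 3)) :
    cayleyMenger p₁ p₂ p₃ p₄ = det (bordered (sqDistMatrix ![p₁, p₂, p₃, p₄])) := by
  unfold cayleyMenger
  congr 1
  ext i j
  fin_cases i <;> fin_cases j <;> simp [bordered, sqDistMatrix, dist_comm]

/-- The circumradius `R` of a tetrahedron with affinely independent vertices
`p₁, p₂, p₃, p₄` in `ℝ³` satisfies `R² = -(1/2)·Δ(p₁,p₂,p₃,p₄)/D(p₁,p₂,p₃,p₄)`. -/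
theorem circumradius_sq_eq_cayleyMenger_ratio
    (p₁ p₂ p₃ p₄ c : EuclideanSpace ℝ (Fin 3)) (R : ℝ)
    (hind : AffineIndependent ℝ ![p₁, p₂, p₃, p₄])
    (h₁ : dist c p₁ = R) (h₂ : dist c p₂ = R)
    (h₃ : dist c p₃ = R) (h₄ : dist c p₄ = R) :
    R ^ 2 = -(1 / 2) * (deltaDet p₁ p₂ p₃ p₄ / cayleyMenger p₁ p₂ p₃ p₄) := by
  rw [deltaDet_eq_det_sqDistMatrix, cayleyMenger_eq_det_bordered_sqDistMatrix]
  refine sq_eq_neg_half_mul_det_sqDistMatrix_div (by simp) hind (c := c) fun i => ?_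
  rw [dist_comm]
  fin_cases i <;> assumption
end

section
/- Points p₁, p₂, p₃, p₄, p₅ of Euclidean three-space ℝ³ are coplanar or lie on a common sphere if and only if Δ(p₁,p₂,p₃,p₄,p₅) = 0, where Δ(p₁,…,p₅) is the determinant of the 5×5 matrix whose (i,j) entry is dist(p_i,p_j)² (with zeros on the diagonal). -/
/-!
Lift `x ∈ ℝⁿ` to `(1, ‖x‖², x) ∈ ℝⁿ⁺²`. Since `‖x - y‖² = ‖x‖² - 2⟪x, y⟫ + ‖y‖²`, the matrix of
squared distances of `p₁, …, pₙ₊₂` factors as `L Mᵀ`, where `L` has rows `(1, ‖pᵢ‖², pᵢ)` and `M`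
has rows `(‖pᵢ‖², 1, -2pᵢ)`. A nonzero kernel vector `(a, d, b)` of either factor is a nonzero
function `a + d ‖x‖² + ⟪b, x⟫` vanishing at every `pᵢ`, and the zero sets of such functions are
the hyperplanes (`d = 0`) and the spheres, possibly shrunk to a point. So `Δ = 0` exactly when the
points lie on a hyperplane or a sphere, and in `ℝ³` lying on a hyperplane is coplanarity.
-/

open Set Matrix RealInnerProductSpace

section GeneralizedSphere

variable {V ι : Type*} [NormedAddCommGroup V] [InnerProductSpace ℝ V]

theorem vectorSpan_range_ne_top_iff [FiniteDimensional ℝ V] (p : ι → V) (i₀ : ι) :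
    vectorSpan ℝ (range p) ≠ ⊤ ↔ ∃ b ≠ 0, ∀ i, ⟪b, p i - p i₀⟫ = 0 := by
  rw [Ne, ← Submodule.orthogonal_eq_bot_iff, ← Ne, Submodule.ne_bot_iff,
    vectorSpan_range_eq_span_range_vsub_right ℝ p i₀]
  refine exists_congr fun b => ?_
  rw [and_comm, Submodule.mem_orthogonal']
  change _ ∧ Submodule.span ℝ _ ≤ LinearMap.ker (innerₛₗ ℝ b) ↔ _
  rw [Submodule.span_le, range_subset_iff]
  rfl

def OnGeneralizedSphere (p : ι → V) : Prop :=
  ∃ a d : ℝ, ∃ b : V, (a, d, b) ≠ 0 ∧ ∀ i, a + d * ‖p i‖ ^ 2 + ⟪b, p i⟫ = 0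

theorem add_mul_norm_sq_add_inner_eq {d : ℝ} (hd : d ≠ 0) (a : ℝ) (b x : V) :
    a + d * ‖x‖ ^ 2 + ⟪b, x⟫ =
      d * (‖x - -(2 * d)⁻¹ • b‖ ^ 2 - (‖-(2 * d)⁻¹ • b‖ ^ 2 - a / d)) := by
  rw [norm_sub_sq_real, real_inner_smul_right, real_inner_comm]
  field_simp
  ring

theorem onGeneralizedSphere_of_dist_eq (p : ι → V) (c : V) (r : ℝ) (h : ∀ i, dist c (p i) = r) :
    OnGeneralizedSphere p := by
  refine ⟨‖c‖ ^ 2 - r ^ 2, 1, (-2 : ℝ) • c, by simp, fun i => ?_⟩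
  rw [← h i, dist_comm, dist_eq_norm, norm_sub_sq_real, real_inner_smul_left, real_inner_comm]
  ring

theorem onGeneralizedSphere_of_vectorSpan_ne_top [FiniteDimensional ℝ V] (p : ι → V) (i₀ : ι)
    (h : vectorSpan ℝ (range p) ≠ ⊤) : OnGeneralizedSphere p := by
  obtain ⟨b, hb, hp⟩ := (vectorSpan_range_ne_top_iff p i₀).1 h
  refine ⟨-⟪b, p i₀⟫, 0, b, by simp [hb], fun i => ?_⟩
  have := hp i
  rw [inner_sub_right] at this
  linarith

theorem OnGeneralizedSphere.vectorSpan_ne_top_or_exists_dist_eq [FiniteDimensional ℝ V]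
    [Nontrivial V] {p : ι → V} (i₀ : ι) (h : OnGeneralizedSphere p) :
    vectorSpan ℝ (range p) ≠ ⊤ ∨ ∃ c r, 0 < r ∧ ∀ i, dist c (p i) = r := by
  obtain ⟨a, d, b, hne, hp⟩ := h
  rcases eq_or_ne d 0 with rfl | hd
  · left
    have hb : b ≠ 0 := by
      rintro rfl
      exact hne (by simpa using hp i₀)
    refine (vectorSpan_range_ne_top_iff p i₀).2 ⟨b, hb, fun i => ?_⟩
    rw [inner_sub_right]
    linarith [hp i, hp i₀]
  · set c := -(2 * d)⁻¹ • b
    set R := ‖c‖ ^ 2 - a / d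
    have hR : ∀ i, dist c (p i) ^ 2 = R := fun i => by
      have := add_mul_norm_sq_add_inner_eq hd a b (p i)
      rw [hp i, zero_eq_mul] at this
      rw [dist_comm, dist_eq_norm]
      linarith [this.resolve_left hd]
    rcases (hR i₀ ▸ sq_nonneg (dist c (p i₀))).lt_or_eq with hR₀ | hR₀
    · exact .inr ⟨c, √R, Real.sqrt_pos.2 hR₀, fun i => by rw [← hR i, Real.sqrt_sq dist_nonneg]⟩
    · left
      have : Nonempty ι := ⟨i₀⟩
      have hpc : p = fun _ => c := funext fun i => by
        have := hR i
        rwa [← hR₀, sq_eq_zero_iff, dist_eq_zero, eq_comm] at this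
      rw [hpc, range_const, vectorSpan_singleton]
      exact bot_ne_top

theorem onGeneralizedSphere_iff [FiniteDimensional ℝ V] [Nontrivial V] [Nonempty ι]
    (p : ι → V) :
    OnGeneralizedSphere p ↔ vectorSpan ℝ (range p) ≠ ⊤ ∨ ∃ c r, 0 < r ∧ ∀ i, dist c (p i) = r := by
  obtain ⟨i₀⟩ := ‹Nonempty ι›
  refine ⟨(·.vectorSpan_ne_top_or_exists_dist_eq i₀), ?_⟩
  rintro (h | ⟨c, r, -, h⟩)
  exacts [onGeneralizedSphere_of_vectorSpan_ne_top p i₀ h, onGeneralizedSphere_of_dist_eq p c r h]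

end GeneralizedSphere

section ParaboloidLift

variable {n : ℕ}

theorem exists_ne_zero_iff_exists_vecCons {P : (Fin (n + 2) → ℝ) → Prop} :
    (∃ v ≠ 0, P v) ↔
      ∃ a d : ℝ, ∃ b : EuclideanSpace ℝ (Fin n), (a, d, b) ≠ 0 ∧
        P (vecCons a (vecCons d (WithLp.ofLp b))) := by
  constructor
  · rintro ⟨v, hv, hP⟩
    refine ⟨vecHead v, vecHead (vecTail v), WithLp.toLp 2 (vecTail (vecTail v)), ?_, by
      rwa [← cons_head_tail v, ← cons_head_tail (vecTail v)] at hP⟩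
    contrapose! hv
    simp only [Prod.mk_eq_zero, WithLp.toLp_eq_zero] at hv
    rw [← cons_head_tail v, ← cons_head_tail (vecTail v), hv.1, hv.2.1, hv.2.2]
    simp
  · rintro ⟨a, d, b, hne, hP⟩
    exact ⟨_, by simpa using hne, hP⟩

noncomputable def paraboloidLift (x : EuclideanSpace ℝ (Fin n)) : Fin (n + 2) → ℝ :=
  vecCons 1 (vecCons (‖x‖ ^ 2) (WithLp.ofLp x))

noncomputable def dualParaboloidLift (x : EuclideanSpace ℝ (Fin n)) : Fin (n + 2) → ℝ :=
  vecCons (‖x‖ ^ 2) (vecCons 1 ((-2 : ℝ) • WithLp.ofLp x))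

theorem paraboloidLift_dotProduct (x : EuclideanSpace ℝ (Fin n)) (a d : ℝ)
    (b : EuclideanSpace ℝ (Fin n)) :
    paraboloidLift x ⬝ᵥ vecCons a (vecCons d (WithLp.ofLp b)) = a + d * ‖x‖ ^ 2 + ⟪b, x⟫ := by
  simp only [paraboloidLift, cons_dotProduct_cons, EuclideanSpace.inner_eq_star_dotProduct,
    star_trivial]
  ring

theorem dualParaboloidLift_dotProduct (x : EuclideanSpace ℝ (Fin n)) (a d : ℝ)
    (b : EuclideanSpace ℝ (Fin n)) :
    dualParaboloidLift x ⬝ᵥ vecCons a (vecCons d (WithLp.ofLp b)) =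
      paraboloidLift x ⬝ᵥ vecCons d (vecCons a (WithLp.ofLp ((-2 : ℝ) • b))) := by
  simp only [paraboloidLift, dualParaboloidLift, cons_dotProduct_cons, WithLp.ofLp_smul,
    smul_dotProduct, dotProduct_smul, smul_eq_mul]
  ring

theorem dist_sq_eq_paraboloidLift_dotProduct (x y : EuclideanSpace ℝ (Fin n)) :
    dist x y ^ 2 = paraboloidLift x ⬝ᵥ dualParaboloidLift y := by
  rw [dualParaboloidLift, ← WithLp.ofLp_smul, paraboloidLift_dotProduct, dist_eq_norm,
    norm_sub_sq_real, real_inner_smul_left, real_inner_comm]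
  ring

theorem det_paraboloidLift_eq_zero_iff (p : Fin (n + 2) → EuclideanSpace ℝ (Fin n)) :
    det (of fun i => paraboloidLift (p i)) = 0 ↔ OnGeneralizedSphere p := by
  rw [← exists_mulVec_eq_zero_iff, exists_ne_zero_iff_exists_vecCons]
  simp only [funext_iff, mulVec, of_apply, paraboloidLift_dotProduct, Pi.zero_apply]
  rfl

theorem det_dualParaboloidLift_eq_zero_iff (p : Fin (n + 2) → EuclideanSpace ℝ (Fin n)) :
    det (of fun i => dualParaboloidLift (p i)) = 0 ↔ OnGeneralizedSphere p := by
  rw [← det_paraboloidLift_eq_zero_iff]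
  simp only [← exists_mulVec_eq_zero_iff, exists_ne_zero_iff_exists_vecCons, funext_iff, mulVec,
    of_apply, Pi.zero_apply, dualParaboloidLift_dotProduct]
  constructor
  · rintro ⟨a, d, b, hne, h⟩
    exact ⟨d, a, (-2 : ℝ) • b, by simpa [and_left_comm] using hne, h⟩
  · rintro ⟨a, d, b, hne, h⟩
    refine ⟨d, a, (-2 : ℝ)⁻¹ • b, by simpa [and_left_comm] using hne, ?_⟩
    simpa [smul_smul] using h

theorem sqDist_matrix_eq_mul (p : Fin (n + 2) → EuclideanSpace ℝ (Fin n)) :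
    of (fun i j => dist (p i) (p j) ^ 2) =
      of (fun i => paraboloidLift (p i)) * (of fun j => dualParaboloidLift (p j))ᵀ := by
  ext i j
  exact dist_sq_eq_paraboloidLift_dotProduct (p i) (p j)

theorem det_sqDist_eq_zero_iff_onGeneralizedSphere (p : Fin (n + 2) → EuclideanSpace ℝ (Fin n)) :
    det (of fun i j => dist (p i) (p j) ^ 2) = 0 ↔ OnGeneralizedSphere p := by
  rw [sqDist_matrix_eq_mul, det_mul, det_transpose, mul_eq_zero, det_paraboloidLift_eq_zero_iff,
    det_dualParaboloidLift_eq_zero_iff, or_self]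

end ParaboloidLift

theorem det_sqDist_eq_zero_iff {n : ℕ} [NeZero n] (p : Fin (n + 2) → EuclideanSpace ℝ (Fin n)) :
    det (of fun i j => dist (p i) (p j) ^ 2) = 0 ↔
      vectorSpan ℝ (range p) ≠ ⊤ ∨ ∃ c r, 0 < r ∧ ∀ i, dist c (p i) = r :=
  (det_sqDist_eq_zero_iff_onGeneralizedSphere p).trans (onGeneralizedSphere_iff p)

theorem coplanar_iff_vectorSpan_ne_top {k V P : Type*} [DivisionRing k] [AddCommGroup V]
    [Module k V] [AddTorsor V P] [FiniteDimensional k V] (h : Module.finrank k V = 3)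
    (s : Set P) : Coplanar k s ↔ vectorSpan k s ≠ ⊤ := by
  rw [coplanar_iff_finrank_le_two]
  constructor
  · rintro hs htop
    rw [htop, finrank_top] at hs
    omega
  · intro hs
    have := Submodule.finrank_lt hs
    omega

/-- Five points of `ℝ³` are coplanar or lie on a common sphere if and only if
the determinant `Δ(p₁,…,p₅)` of the `5×5` matrix of their squared mutual
distances vanishes. -/
theorem coplanar_or_cospherical_iff_delta_det_eq_zero
    (p : Fin 5 → EuclideanSpace ℝ (Fin 3)) :
    (Coplanar ℝ (Set.range p) ∨
      ∃ (c : EuclideanSpace ℝ (Fin 3)) (r : ℝ), 0 < r ∧ ∀ i, dist c (p i) = r) ↔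
    Matrix.det (Matrix.of fun i j : Fin 5 => dist (p i) (p j) ^ 2) = 0 := by
  rw [coplanar_iff_vectorSpan_ne_top finrank_euclideanSpace_fin]
  exact (det_sqDist_eq_zero_iff p).symm
end
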